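/- Let R₁ be a rotation about a line ℓ₁ and R₂ a half-turn about a line ℓ₂ in ℝ³, with R₁(B) = R₂(B) = C for some points B ≠ C, and suppose there is a line ℓ_B through B mapped by both R₁ and R₂ to the same line ℓ_C through C. If ℓ₁ and ℓ₂ are parallel and distinct, then ℓ_B and ℓ_C are both parallel to ℓ₁. -/

import Mathlib

/-!
The linear parts `L₁`, `L₂` of `R₁`, `R₂` fix the common direction `D` of `ℓ₁` and `ℓ₂`, and `L₂`
is the reflection in `D`. Both send the direction `u` of `ℓ_B` onto the direction of `ℓ_C`, so
`L₁ u = ±L₂ u`. An orientation-preserving isometry of `ℝ³` fixing `D` and a vector off `D` is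
the identity, which leaves three cases: `u ∈ D` (the claim); `L₁ = L₂`, so `R₁ = R₂` as they agree
at `B`, and then `R₂` fixes `ℓ₁`, forcing `ℓ₁ = ℓ₂`; or `L₁ = 1`, so `R₁`, having a fixed point,
is the identity and `B = C`.
-/

noncomputable section

/-- Euclidean 3-space. -/
abbrev E3 : Type := EuclideanSpace ℝ (Fin 3)

/-- A line in `ℝ³`: an affine subspace with one-dimensional direction. -/
def IsLine (ℓ : AffineSubspace ℝ E3) : Prop := Module.finrank ℝ ℓ.direction = 1

/-- A rotation of `ℝ³` about the line `ℓ`: an orientation-preserving isometry of `ℝ³`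
fixing every point of `ℓ`. -/
def IsRotationAbout (ℓ : AffineSubspace ℝ E3) (R : E3 ≃ᵃⁱ[ℝ] E3) : Prop :=
  LinearMap.det (R.linearIsometryEquiv.toLinearEquiv : E3 →ₗ[ℝ] E3) = 1 ∧ ∀ x ∈ ℓ, R x = x

/-- A half-turn (rotation by angle `π`) about the line `ℓ`: the isometry fixing `ℓ`
pointwise whose linear part acts as `-1` on the orthogonal complement of the direction. -/
def IsHalfTurnAbout (ℓ : AffineSubspace ℝ E3) (R : E3 ≃ᵃⁱ[ℝ] E3) : Prop :=
  (∀ x ∈ ℓ, R x = x) ∧ ∀ v ∈ ℓ.directionᗮ, R.linearIsometryEquiv v = -v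

open Module
open scoped RealInnerProductSpace

theorem Submodule.exists_eq_span_singleton_of_finrank_eq_one {K V : Type*} [DivisionRing K]
    [AddCommGroup V] [Module K V] {S : Submodule K V} (h : finrank K S = 1) :
    ∃ v ≠ 0, S = K ∙ v := by
  have : FiniteDimensional K S := Module.finite_of_finrank_eq_succ h
  obtain ⟨v, hv, hv0⟩ := S.exists_mem_ne_zero_of_ne_bot (by rintro rfl; simp at h)
  exact ⟨v, hv0, (Submodule.eq_of_le_of_finrank_eq ((Submodule.span_singleton_le_iff_mem _ _).2 hv)
    (by rw [finrank_span_singleton hv0, h])).symm⟩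

theorem eq_or_eq_neg_of_mem_span_singleton_of_norm_eq {V : Type*} [NormedAddCommGroup V]
    [NormedSpace ℝ V] {x y : V} (hy : y ∈ ℝ ∙ x) (hnorm : ‖y‖ = ‖x‖) : y = x ∨ y = -x := by
  obtain ⟨c, rfl⟩ := Submodule.mem_span_singleton.1 hy
  rcases eq_or_ne x 0 with rfl | hx
  · simp
  have hc : |c| = 1 := by
    rw [norm_smul, Real.norm_eq_abs] at hnorm
    exact (mul_eq_right₀ (norm_ne_zero_iff.2 hx)).1 hnorm
  rcases abs_eq_abs.1 (hc.trans abs_one.symm) with rfl | rfl <;> simp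

section LinearIsometry

variable {V : Type*} [NormedAddCommGroup V] [InnerProductSpace ℝ V]

theorem finrank_orthogonal_sup_span_singleton [FiniteDimensional ℝ V] (hV : finrank ℝ V = 3)
    {D : Submodule ℝ V} (hD : finrank ℝ D = 1) {u : V} (hu : u ∉ D) :
    finrank ℝ (D ⊔ ℝ ∙ u)ᗮ = 1 := by
  have hu0 : u ≠ 0 := fun h => hu (h ▸ D.zero_mem)
  have hsup := Submodule.finrank_sup_add_finrank_inf_eq D (ℝ ∙ u)
  rw [((Submodule.disjoint_span_singleton' hu0).2 hu).eq_bot, finrank_bot, hD,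
    finrank_span_singleton hu0] at hsup
  have := (D ⊔ ℝ ∙ u).finrank_add_finrank_orthogonal
  omega

namespace LinearIsometryEquiv

theorem eq_reflection_of_eqOn (L : V ≃ₗᵢ[ℝ] V) (K : Submodule ℝ V) [K.HasOrthogonalProjection]
    (hK : ∀ x ∈ K, L x = x) (hKo : ∀ x ∈ Kᗮ, L x = -x) : L = K.reflection :=
  LinearMap.ext_on_codisjoint K.isCompl_orthogonal.codisjoint
    (fun x hx => by simp [hK x hx, K.reflection_mem_subspace_eq_self hx])
    (fun x hx => by simp [hKo x hx, K.reflection_mem_subspace_orthogonalComplement_eq_neg hx])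

theorem eq_refl_of_eqOn (L : V ≃ₗᵢ[ℝ] V) (K : Submodule ℝ V) [K.HasOrthogonalProjection]
    (hK : ∀ x ∈ K, L x = x) (hKo : ∀ x ∈ Kᗮ, L x = x) : L = refl ℝ V :=
  LinearMap.ext_on_codisjoint K.isCompl_orthogonal.codisjoint
    (fun x hx => by simp [hK x hx]) (fun x hx => by simp [hKo x hx])

theorem apply_mem_orthogonal (L : V ≃ₗᵢ[ℝ] V) {K : Submodule ℝ V} (hK : ∀ x ∈ K, L x = x)
    {w : V} (hw : w ∈ Kᗮ) : L w ∈ Kᗮ := fun k hk => by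
  rw [← hK k hk, L.inner_map_map]
  exact hw k hk

/-- On the normal line `Kᗮ` the isometry acts by `±1`, and `-1` would make it the reflection in
`K`, of determinant `-1`. -/
theorem eq_refl_of_det_eq_one [FiniteDimensional ℝ V] (L : V ≃ₗᵢ[ℝ] V) (K : Submodule ℝ V)
    (hK : finrank ℝ Kᗮ = 1) (hfix : ∀ x ∈ K, L x = x)
    (hdet : LinearMap.det (L.toLinearEquiv : V →ₗ[ℝ] V) = 1) : L = refl ℝ V := by
  obtain ⟨w, hw0, hKw⟩ := Submodule.exists_eq_span_singleton_of_finrank_eq_one hK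
  have hLw : L w ∈ ℝ ∙ w :=
    hKw ▸ L.apply_mem_orthogonal hfix (hKw ▸ Submodule.mem_span_singleton_self w)
  have hKo : ∀ ε : ℝ, L w = ε • w → ∀ x ∈ Kᗮ, L x = ε • x := by
    intro ε hε x hx
    obtain ⟨a, rfl⟩ := Submodule.mem_span_singleton.1 (hKw ▸ hx)
    rw [map_smul, hε, smul_comm]
  rcases eq_or_eq_neg_of_mem_span_singleton_of_norm_eq hLw (L.norm_map w) with h | h
  · exact L.eq_refl_of_eqOn K hfix (by simpa using hKo 1 (by simpa using h))
  · have hL := L.eq_reflection_of_eqOn K hfix (by simpa using hKo (-1) (by simpa using h))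
    have hdet' : ((-1 : ℝ) ^ finrank ℝ Kᗮ) = 1 := K.det_reflection.symm.trans (hL ▸ hdet)
    norm_num [hK] at hdet'

theorem eq_refl_of_det_eq_one_of_fixes [FiniteDimensional ℝ V] (hV : finrank ℝ V = 3)
    (L : V ≃ₗᵢ[ℝ] V) (hdet : LinearMap.det (L.toLinearEquiv : V →ₗ[ℝ] V) = 1)
    {D : Submodule ℝ V} (hD : finrank ℝ D = 1) (hfix : ∀ x ∈ D, L x = x)
    {u : V} (hu : u ∉ D) (hLu : L u = u) : L = refl ℝ V := by
  refine L.eq_refl_of_det_eq_one _ (finrank_orthogonal_sup_span_singleton hV hD hu) ?_ hdet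
  intro x hx
  obtain ⟨a, ha, b, hb, rfl⟩ := Submodule.mem_sup.1 hx
  obtain ⟨c, rfl⟩ := Submodule.mem_span_singleton.1 hb
  simp [hfix a ha, hLu]

/-- Here `L u = ±D.reflection u`. With `+`, `D.reflection ∘ L` fixes `D` and `u`; with `-`,
`u ⊥ D` (as `L` and `D.reflection` both fix `D`), so `L` itself fixes `u`. -/
theorem mem_or_eq_reflection_or_eq_refl [FiniteDimensional ℝ V] (hV : finrank ℝ V = 3)
    (L : V ≃ₗᵢ[ℝ] V) (hdet : LinearMap.det (L.toLinearEquiv : V →ₗ[ℝ] V) = 1)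
    {D : Submodule ℝ V} (hD : finrank ℝ D = 1) (hfix : ∀ x ∈ D, L x = x)
    {u : V} (hspan : D.reflection u ∈ ℝ ∙ L u) :
    u ∈ D ∨ L = D.reflection ∨ L = refl ℝ V := by
  by_cases huD : u ∈ D
  · exact Or.inl huD
  right
  rcases eq_or_eq_neg_of_mem_span_singleton_of_norm_eq hspan (by simp) with h | h
  · left
    have hdetD : LinearMap.det (D.reflection.toLinearEquiv : V →ₗ[ℝ] V) = 1 := by
      have := D.finrank_add_finrank_orthogonal
      have hDo : finrank ℝ Dᗮ = 2 := by omega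
      simp [hDo]
    have hM : L.trans D.reflection = refl ℝ V := by
      refine (L.trans D.reflection).eq_refl_of_det_eq_one_of_fixes hV ?_ hD (fun x hx => ?_) huD ?_
      · change LinearMap.det ((D.reflection.toLinearEquiv : V →ₗ[ℝ] V) ∘ₗ
          (L.toLinearEquiv : V →ₗ[ℝ] V)) = 1
        rw [LinearMap.det_comp, hdet, hdetD, mul_one]
      · simp [hfix x hx, D.reflection_mem_subspace_eq_self hx]
      · simp [← h]
    ext x
    simpa using congr(D.reflection ($hM x))
  · right
    have huDo : u ∈ Dᗮ := by
      intro x hx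
      have h1 : ⟪x, u⟫ = ⟪x, L u⟫ := by rw [← L.inner_map_map, hfix x hx]
      have h2 : ⟪x, u⟫ = -⟪x, L u⟫ := by
        rw [← inner_neg_right, ← h, ← D.reflection.inner_map_map x u,
          D.reflection_mem_subspace_eq_self hx]
      linarith
    refine L.eq_refl_of_det_eq_one_of_fixes hV hdet hD hfix huD ?_
    rw [D.reflection_mem_subspace_orthogonalComplement_eq_neg huDo] at h
    exact neg_inj.1 h.symm

end LinearIsometryEquiv

end LinearIsometry

namespace AffineIsometryEquiv

variable {𝕜 V V₂ P P₂ : Type*} [NormedField 𝕜] [SeminormedAddCommGroup V] [NormedSpace 𝕜 V]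
  [PseudoMetricSpace P] [NormedAddTorsor V P] [SeminormedAddCommGroup V₂] [NormedSpace 𝕜 V₂]
  [PseudoMetricSpace P₂] [NormedAddTorsor V₂ P₂]

theorem ext_of_linearIsometryEquiv_eq {R₁ R₂ : P ≃ᵃⁱ[𝕜] P₂}
    (h : R₁.linearIsometryEquiv = R₂.linearIsometryEquiv) {p : P} (hp : R₁ p = R₂ p) :
    R₁ = R₂ :=
  ext fun x => by rw [← vsub_vadd x p, map_vadd, map_vadd, h, hp]

theorem linearIsometryEquiv_apply_eq_self_of_mem_direction (R : P ≃ᵃⁱ[𝕜] P)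
    {s : AffineSubspace 𝕜 P} (hfix : ∀ x ∈ s, R x = x) {v : V} (hv : v ∈ s.direction) :
    R.linearIsometryEquiv v = v := by
  have hle : s.direction ≤ LinearMap.eqLocus (R.linearIsometryEquiv : V →ₗ[𝕜] V) LinearMap.id := by
    rw [AffineSubspace.direction_eq_vectorSpan, vectorSpan_def, Submodule.span_le]
    rintro _ ⟨x, hx, y, hy, rfl⟩
    simp [hfix x hx, hfix y hy]
  exact hle hv

theorem direction_eq_map_of_image_eq (R : P ≃ᵃⁱ[𝕜] P₂) {s : AffineSubspace 𝕜 P}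
    {t : AffineSubspace 𝕜 P₂} (h : R '' s = t) :
    t.direction = s.direction.map (R.linearIsometryEquiv : V →ₗ[𝕜] V₂) := by
  rw [← SetLike.coe_injective (s.coe_map R.toAffineMap ▸ h : (s.map R.toAffineMap : Set P₂) = t),
    AffineSubspace.map_direction]
  rfl

end AffineIsometryEquiv

theorem AffineIsometryEquiv.mem_of_apply_eq_self {V P : Type*} [NormedAddCommGroup V]
    [InnerProductSpace ℝ V] [MetricSpace P] [NormedAddTorsor V P] (R : P ≃ᵃⁱ[ℝ] P)
    {s : AffineSubspace ℝ P} [s.direction.HasOrthogonalProjection]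
    (hR : R.linearIsometryEquiv = s.direction.reflection) {p : P} (hp : p ∈ s) (hRp : R p = p)
    {x : P} (hx : R x = x) : x ∈ s := by
  rw [← AffineSubspace.vsub_right_mem_direction_iff_mem hp, ← Submodule.reflection_eq_self_iff,
    ← hR, map_vsub, hx, hRp]

theorem IsLine.nonempty {ℓ : AffineSubspace ℝ E3} (h : IsLine ℓ) : (ℓ : Set E3).Nonempty :=
  (AffineSubspace.nonempty_iff_ne_bot ℓ).2 fun hℓ => by
    rw [IsLine, hℓ, AffineSubspace.direction_bot, finrank_bot] at h
    exact zero_ne_one h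

theorem stmt3_general (B C : E3) (hBC : B ≠ C) (ℓ₁ ℓ₂ ℓB ℓC : AffineSubspace ℝ E3)
    (hℓ₁ : IsLine ℓ₁) (hℓ₂ : IsLine ℓ₂) (hℓB : IsLine ℓB)
    (R₁ R₂ : E3 ≃ᵃⁱ[ℝ] E3) (hR₁ : IsRotationAbout ℓ₁ R₁) (hR₂ : IsHalfTurnAbout ℓ₂ R₂)
    (hB₁ : R₁ B = C) (hB₂ : R₂ B = C)
    (himg₁ : R₁ '' (ℓB : Set E3) = (ℓC : Set E3))
    (himg₂ : R₂ '' (ℓB : Set E3) = (ℓC : Set E3))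
    (hpar : ℓ₁.direction = ℓ₂.direction) (hne : ℓ₁ ≠ ℓ₂) :
    ℓB.direction = ℓ₁.direction ∧ ℓC.direction = ℓ₁.direction := by
  obtain ⟨hdet, hfix₁⟩ := hR₁
  obtain ⟨hfix₂, hhalf⟩ := hR₂
  have hL₁ (v) (hv : v ∈ ℓ₁.direction) : R₁.linearIsometryEquiv v = v :=
    R₁.linearIsometryEquiv_apply_eq_self_of_mem_direction hfix₁ hv
  have hL₂ : R₂.linearIsometryEquiv = ℓ₂.direction.reflection :=
    R₂.linearIsometryEquiv.eq_reflection_of_eqOn _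
      (fun v => R₂.linearIsometryEquiv_apply_eq_self_of_mem_direction hfix₂) hhalf
  obtain ⟨u, hu0, hu⟩ := Submodule.exists_eq_span_singleton_of_finrank_eq_one hℓB
  have hC (R : E3 ≃ᵃⁱ[ℝ] E3) (h : R '' ℓB = ℓC) : ℓC.direction = ℝ ∙ R.linearIsometryEquiv u := by
    rw [R.direction_eq_map_of_image_eq h, hu, Submodule.map_span, Set.image_singleton]
    rfl
  obtain ⟨p₁, hp₁⟩ := hℓ₁.nonempty
  obtain ⟨p₂, hp₂⟩ := hℓ₂.nonempty
  have hspan : ℓ₁.direction.reflection u ∈ ℝ ∙ R₁.linearIsometryEquiv u := by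
    rw [hpar, ← hL₂, ← hC R₁ himg₁, hC R₂ himg₂]
    exact Submodule.mem_span_singleton_self _
  rcases R₁.linearIsometryEquiv.mem_or_eq_reflection_or_eq_refl finrank_euclideanSpace_fin hdet
      hℓ₁ hL₁ hspan with huD | hrefl | hid
  · have hB : ℓB.direction = ℓ₁.direction := hu ▸ Submodule.eq_of_le_of_finrank_eq
      ((Submodule.span_singleton_le_iff_mem _ _).2 huD) (by rw [finrank_span_singleton hu0, hℓ₁])
    exact ⟨hB, by rw [hC R₁ himg₁, hL₁ u huD, ← hu, hB]⟩
  · have hR : R₁ = R₂ :=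
      AffineIsometryEquiv.ext_of_linearIsometryEquiv_eq (hrefl.trans (hpar ▸ hL₂.symm))
        (hB₁.trans hB₂.symm)
    exact absurd (AffineSubspace.ext_of_direction_eq hpar
      ⟨p₁, hp₁, R₂.mem_of_apply_eq_self hL₂ hp₂ (hfix₂ p₂ hp₂) (hR ▸ hfix₁ p₁ hp₁)⟩) hne
  · have hR : R₁ = AffineIsometryEquiv.refl ℝ E3 :=
      AffineIsometryEquiv.ext_of_linearIsometryEquiv_eq hid (hfix₁ p₁ hp₁)
    exact (hBC (by rw [← hB₁, hR]; rfl)).elim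

/-- If `R₁` (rotation about `ℓ₁`) and `R₂` (half-turn about `ℓ₂`) both take `B` to `C ≠ B`
and both map a line `ℓ_B` through `B` to the same line `ℓ_C` through `C`, and if `ℓ₁` and
`ℓ₂` are parallel and distinct, then `ℓ_B` and `ℓ_C` are both parallel to `ℓ₁`. -/
theorem stmt3 (B C : E3) (hBC : B ≠ C) (ℓ₁ ℓ₂ ℓB ℓC : AffineSubspace ℝ E3)
    (hℓ₁ : IsLine ℓ₁) (hℓ₂ : IsLine ℓ₂) (hℓB : IsLine ℓB) (hℓC : IsLine ℓC)
    (hBmem : B ∈ ℓB) (hCmem : C ∈ ℓC)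
    (R₁ R₂ : E3 ≃ᵃⁱ[ℝ] E3) (hR₁ : IsRotationAbout ℓ₁ R₁) (hR₂ : IsHalfTurnAbout ℓ₂ R₂)
    (hB₁ : R₁ B = C) (hB₂ : R₂ B = C)
    (himg₁ : R₁ '' (ℓB : Set E3) = (ℓC : Set E3))
    (himg₂ : R₂ '' (ℓB : Set E3) = (ℓC : Set E3))
    (hpar : ℓ₁.direction = ℓ₂.direction) (hne : ℓ₁ ≠ ℓ₂) :
    ℓB.direction = ℓ₁.direction ∧ ℓC.direction = ℓ₁.direction :=
  stmt3_general B C hBC ℓ₁ ℓ₂ ℓB ℓC hℓ₁ hℓ₂ hℓB R₁ R₂ hR₁ hR₂ hB₁ hB₂ himg₁ himg₂ hpar hne
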